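/- Let S be a countably generated characteristic set, i.e., assume there exists a sequence of sequences ξ^(k) ∈ c₀* (k ∈ ℕ) such that S = {η ∈ c₀* : there exist k, m ∈ ℕ and C > 0 with η_n ≤ C·ξ^(k)_{⌈n/m⌉} for all n}. Then S is am-closed (i.e., ξ ∈ c₀*, η ∈ S and ξ ≺ η imply ξ ∈ S) if and only if S is am-stable (i.e., η ∈ S implies η_a ∈ S). -/

import Mathlib

/-!
Sequences are indexed by `ℕ` starting at 0, so that entry `n` corresponds to the
`(n+1)`-st term of a sequence indexed by `{1,2,...}`.  With this convention the
`m`-fold ampliation `(D_mξ)_k = ξ_{⌈k/m⌉}` (for `m ≥ 1`) becomes `n ↦ ξ (n / m)`.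
-/

/-- `ξ ∈ c₀*`: nonnegative, nonincreasing, converging to 0. -/
def IsC0Star (ξ : ℕ → ℝ) : Prop :=
  (∀ n, 0 ≤ ξ n) ∧ (∀ n, ξ (n + 1) ≤ ξ n) ∧ Filter.Tendsto ξ Filter.atTop (nhds 0)

/-- `ξ ≺ η`: majorization, `∑_{j=1}^n ξ_j ≤ ∑_{j=1}^n η_j` for every `n`. -/
def Maj (ξ η : ℕ → ℝ) : Prop :=
  ∀ n : ℕ, ∑ j ∈ Finset.range n, ξ j ≤ ∑ j ∈ Finset.range n, η j

/-- The arithmetic mean `(ξ_a)_n = (1/n)∑_{j=1}^n ξ_j` (0-based indexing). -/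
noncomputable def am (ξ : ℕ → ℝ) (n : ℕ) : ℝ :=
  (∑ j ∈ Finset.range (n + 1), ξ j) / (n + 1)

/-!
If `S` is am-stable, then `ξ ≺ η ∈ S` gives `ξ ≤ ξ_a ≤ η_a ∈ S`. Conversely, let `η ∈ S` with
`η_a ∉ S`. Enumerating the countably many conditions `ξ ≤ C · D_m ξ^(k)` that define `S`, with
`C` growing, one finds `n_0 < n_1 < ⋯` such that `2^{-(i+1)} (η_a)_{n_i}` violates the `i`-th
condition. The step sequence equal to `2^{-(i+1)} (η_a)_{n_i}` on `(n_{i-1}, n_i]` is then in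
`c₀*` but not in `S`, and it is majorized by `η`: it lies below
`∑ᵢ 2^{-(i+1)} (η_a)_{n_i} 1_{[0, n_i]}`, and `(η_a)_n 1_{[0, n]} ≺ η` for every `n`.
-/

open Finset Filter Topology

lemma am_nonneg {ξ : ℕ → ℝ} (h : ∀ n, 0 ≤ ξ n) (n : ℕ) : 0 ≤ am ξ n :=
  div_nonneg (sum_nonneg fun j _ => h j) (by positivity)

lemma succ_mul_am (ξ : ℕ → ℝ) (n : ℕ) : ((n : ℝ) + 1) * am ξ n = ∑ j ∈ range (n + 1), ξ j := by
  rw [am, mul_div_cancel₀ _ (by positivity)]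

lemma Antitone.le_am {ξ : ℕ → ℝ} (h : Antitone ξ) (n : ℕ) : ξ n ≤ am ξ n := by
  rw [am, le_div_iff₀ (by positivity)]
  have := card_nsmul_le_sum (range (n + 1)) ξ (ξ n)
    fun j hj => h (Nat.le_of_lt_succ (mem_range.mp hj))
  simpa [mul_comm] using this

lemma antitone_am {ξ : ℕ → ℝ} (h : Antitone ξ) : Antitone (am ξ) := by
  refine antitone_nat_of_succ_le fun n => ?_
  have hsucc : (((n + 1 : ℕ) : ℝ) + 1) * am ξ (n + 1) = (n + 1) * am ξ n + ξ (n + 1) := by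
    rw [succ_mul_am, succ_mul_am, sum_range_succ _ (n + 1)]
  push_cast at hsucc
  have : ξ (n + 1) ≤ am ξ n := (h n.le_succ).trans (h.le_am n)
  nlinarith

lemma tendsto_am {ξ : ℕ → ℝ} {a : ℝ} (h : Tendsto ξ atTop (𝓝 a)) :
    Tendsto (am ξ) atTop (𝓝 a) := by
  refine (h.cesaro.comp (tendsto_add_atTop_nat 1)).congr fun n => ?_
  simp only [Function.comp_apply, am, Nat.cast_add_one, inv_mul_eq_div]

lemma IsC0Star.antitone {ξ : ℕ → ℝ} (h : IsC0Star ξ) : Antitone ξ :=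
  antitone_nat_of_succ_le h.2.1

lemma IsC0Star.am {ξ : ℕ → ℝ} (h : IsC0Star ξ) : IsC0Star (am ξ) :=
  ⟨am_nonneg h.1, fun n => antitone_am h.antitone n.le_succ, tendsto_am h.2.2⟩

lemma Maj.am_le {ξ η : ℕ → ℝ} (h : Maj ξ η) (n : ℕ) : am ξ n ≤ am η n :=
  div_le_div_of_nonneg_right (h (n + 1)) (by positivity)

lemma maj_am_indicator {η : ℕ → ℝ} (hη : Antitone η) (hη0 : ∀ n, 0 ≤ η n) (n : ℕ) :
    Maj (fun j => if j ≤ n then am η n else 0) η := by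
  intro N
  have hfilter : (range N).filter (· ≤ n) = range (min N (n + 1)) := by
    ext j; simp only [mem_filter, mem_range]; omega
  rw [sum_ite, sum_const_zero, add_zero, hfilter, sum_const, card_range, nsmul_eq_mul]
  obtain hp | ⟨p, hp⟩ : min N (n + 1) = 0 ∨ ∃ p, min N (n + 1) = p + 1 :=
    (min N (n + 1)).eq_zero_or_eq_succ_pred.imp id fun h => ⟨_, h⟩
  · simpa [hp] using sum_nonneg fun j _ => hη0 j
  · calc (↑(min N (n + 1)) : ℝ) * am η n ≤ ((p : ℝ) + 1) * am η p := by
          rw [hp, Nat.cast_add_one]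
          exact mul_le_mul_of_nonneg_left (antitone_am hη (by omega)) (by positivity)
      _ = ∑ j ∈ range (p + 1), η j := succ_mul_am η p
      _ ≤ ∑ j ∈ range N, η j :=
          sum_le_sum_of_subset_of_nonneg (range_subset_range.mpr (by omega)) fun j _ _ => hη0 j

lemma exists_maj_apply_eq_mul_am {η : ℕ → ℝ} (hη : IsC0Star η) {f : ℕ → ℕ} (hf : StrictMono f)
    {c : ℕ → ℝ} (hc : Antitone c) (hc0 : ∀ i, 0 ≤ c i) (hc1 : ∀ t, ∑ i ∈ range t, c i ≤ 1) :
    ∃ ξ, IsC0Star ξ ∧ Maj ξ η ∧ ∀ i, ξ (f i) = c i * am η (f i) := by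
  classical
  have hex : ∀ j, ∃ i, j ≤ f i := fun j => ⟨j, hf.id_le j⟩
  -- `ξ` is constant, equal to `c i · (η_a)_{f i}`, on the block `(f (i-1), f i]`.
  set B : ℕ → ℕ := fun j => Nat.find (hex j)
  have hB : ∀ j, j ≤ f (B j) := fun j => Nat.find_spec (hex j)
  have hB_le : ∀ j, B j ≤ j := fun j => Nat.find_min' _ (hf.id_le j)
  have hB_mono : Monotone B := fun j j' h => Nat.find_mono fun _ hi => h.trans hi
  have hB_f : ∀ i, B (f i) = i := fun i =>
    le_antisymm (Nat.find_min' _ le_rfl) (hf.le_iff_le.mp (hB (f i)))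
  have hc_le_one : ∀ i, c i ≤ 1 := fun i => (hc i.zero_le).trans (by simpa using hc1 1)
  have hA := hη.am
  set ξ : ℕ → ℝ := fun j => c (B j) * am η (f (B j))
  have hξ0 : ∀ j, 0 ≤ ξ j := fun j => mul_nonneg (hc0 _) (hA.1 _)
  have hξ_le : ∀ j, ξ j ≤ am η j := fun j =>
    (mul_le_of_le_one_left (hA.1 _) (hc_le_one _)).trans (hA.antitone (hB j))
  refine ⟨ξ, ⟨hξ0, fun j => ?_, ?_⟩, fun N => ?_, fun i => by simp only [ξ, hB_f]⟩
  · exact mul_le_mul (hc (hB_mono j.le_succ)) (hA.antitone (hf.monotone (hB_mono j.le_succ)))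
      (hA.1 _) (hc0 _)
  · exact tendsto_of_tendsto_of_tendsto_of_le_of_le tendsto_const_nhds hA.2.2 hξ0 hξ_le
  calc ∑ j ∈ range N, ξ j
      ≤ ∑ j ∈ range N, ∑ i ∈ range N, c i * if j ≤ f i then am η (f i) else 0 := by
        refine sum_le_sum fun j hj => ?_
        have hBj : B j ∈ range N := mem_range.mpr ((hB_le j).trans_lt (mem_range.mp hj))
        refine le_of_eq_of_le ?_ (single_le_sum (fun i _ => ?_) hBj)
        · simp only [ξ, if_pos (hB j)]
        · exact mul_nonneg (hc0 i) (by split_ifs <;> simp [hA.1])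
    _ = ∑ i ∈ range N, c i * ∑ j ∈ range N, if j ≤ f i then am η (f i) else 0 := by
        rw [sum_comm]
        simp only [mul_sum]
    _ ≤ ∑ i ∈ range N, c i * ∑ j ∈ range N, η j :=
        sum_le_sum fun i _ =>
          mul_le_mul_of_nonneg_left (maj_am_indicator hη.antitone hη.1 (f i) N) (hc0 i)
    _ ≤ ∑ j ∈ range N, η j := by
        rw [← sum_mul]
        exact mul_le_of_le_one_left (sum_nonneg fun j _ => hη.1 j) (hc1 N)

def IsDominated (gen : ℕ → ℕ → ℝ) (η : ℕ → ℝ) : Prop :=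
  ∃ k m : ℕ, 0 < m ∧ ∃ C : ℝ, 0 < C ∧ ∀ n, η n ≤ C * gen k (n / m)

lemma IsDominated.mono {gen : ℕ → ℕ → ℝ} {ξ η : ℕ → ℝ} (h : IsDominated gen η)
    (hle : ∀ n, ξ n ≤ η n) : IsDominated gen ξ :=
  let ⟨k, m, hm, C, hC, hbd⟩ := h
  ⟨k, m, hm, C, hC, fun n => (hle n).trans (hbd n)⟩

lemma frequently_mul_lt_of_forall_exists_mul_lt {g ζ : ℕ → ℝ} (hg : Antitone g)
    (hζ : Antitone ζ) (hζ0 : ∀ n, 0 < ζ n) (h : ∀ C > 0, ∃ n, C * g n < ζ n) {C : ℝ}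
    (hC : 0 < C) : ∃ᶠ n in atTop, C * g n < ζ n := by
  by_contra hfreq
  simp only [not_frequently, not_lt, eventually_atTop] at hfreq
  obtain ⟨N, hN⟩ := hfreq
  have hgN : 0 < g N := pos_of_mul_pos_right ((hζ0 N).trans_le (hN N le_rfl)) hC.le
  -- Beyond `N` the constant `C` works; below `N` the ratio `ζ 0 / g N` does.
  obtain ⟨n, hn⟩ := h (max C (ζ 0 / g N)) (lt_max_of_lt_left hC)
  refine hn.not_ge ?_
  rcases le_total N n with hNn | hnN
  · have hgn : 0 < g n := pos_of_mul_pos_right ((hζ0 n).trans_le (hN n hNn)) hC.le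
    exact (hN n hNn).trans (mul_le_mul_of_nonneg_right (le_max_left _ _) hgn.le)
  · calc ζ n ≤ ζ 0 := hζ n.zero_le
      _ = ζ 0 / g N * g N := (div_mul_cancel₀ _ hgN.ne').symm
      _ ≤ max C (ζ 0 / g N) * g n :=
          mul_le_mul (le_max_right _ _) (hg hnN) hgN.le (le_max_of_le_left hC.le)

def enumPairs (i : ℕ) : ℕ × ℕ := Nat.unpair (Nat.unpair i).1

lemma exists_le_enumPairs_eq (p : ℕ × ℕ) (t : ℕ) : ∃ i, t ≤ i ∧ enumPairs i = p :=
  ⟨Nat.pair (Nat.pair p.1 p.2) t, Nat.right_le_pair _ _, by simp [enumPairs]⟩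

lemma sum_range_half_pow_succ_le_one (t : ℕ) : ∑ i ∈ range t, (1 / 2 : ℝ) ^ (i + 1) ≤ 1 := by
  have := sum_geometric_two_le t
  simp_rw [pow_succ, ← sum_mul]
  linarith

lemma exists_maj_not_isDominated {gen : ℕ → ℕ → ℝ} (hgen : ∀ k, Antitone (gen k))
    (hgen0 : ∀ k n, 0 ≤ gen k n) {η : ℕ → ℝ} (hη : IsC0Star η) (hη0 : 0 < η 0)
    (h : ¬ IsDominated gen (am η)) : ∃ ξ, IsC0Star ξ ∧ Maj ξ η ∧ ¬ IsDominated gen ξ := by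
  have hA0 : ∀ n, 0 < am η n := fun n => div_pos
    (hη0.trans_le (single_le_sum (fun j _ => hη.1 j) (mem_range.mpr n.succ_pos))) (by positivity)
  simp only [IsDominated, not_exists, not_and, not_forall, not_le] at h
  -- Stage `i` defeats the pair `enumPairs i = (k, m - 1)` with constant `i + 1`.
  have hfreq : ∀ i : ℕ, ∃ᶠ n in atTop, ((i : ℝ) + 1) * 2 ^ (i + 1) *
      gen (enumPairs i).1 (n / ((enumPairs i).2 + 1)) < am η n := fun i =>
    frequently_mul_lt_of_forall_exists_mul_lt
      ((hgen _).comp_monotone fun _ _ hab => Nat.div_le_div_right hab)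
      (antitone_am hη.antitone) hA0 (h _ _ (Nat.succ_pos _)) (by positivity)
  obtain ⟨f, hf, hf_lt⟩ := extraction_forall_of_frequently hfreq
  obtain ⟨ξ, hξ, hmaj, hξf⟩ := exists_maj_apply_eq_mul_am hη hf (c := fun i => (1 / 2) ^ (i + 1))
    (fun i j hij => pow_le_pow_of_le_one (by norm_num) (by norm_num) (by omega))
    (fun _ => by positivity) sum_range_half_pow_succ_le_one
  refine ⟨ξ, hξ, hmaj, fun ⟨k, m, hm, C, hC, hbd⟩ => ?_⟩
  obtain ⟨i, hi, hpair⟩ := exists_le_enumPairs_eq (k, m - 1) ⌈C⌉₊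
  have hlt := hf_lt i
  simp only [hpair, Nat.sub_add_cancel hm] at hlt
  have hCi : C ≤ i + 1 := (Nat.le_ceil C).trans (by exact_mod_cast hi.trans i.le_succ)
  have hξi : ((i : ℝ) + 1) * gen k (f i / m) < ξ (f i) := by
    rw [hξf]
    calc ((i : ℝ) + 1) * gen k (f i / m)
        = (1 / 2) ^ (i + 1) * (((i : ℝ) + 1) * 2 ^ (i + 1) * gen k (f i / m)) := by
          have hpow : (1 / 2 : ℝ) ^ (i + 1) * 2 ^ (i + 1) = 1 := by rw [← mul_pow]; norm_num
          linear_combination (-((i : ℝ) + 1) * gen k (f i / m)) * hpow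
      _ < (1 / 2) ^ (i + 1) * am η (f i) := by gcongr
  nlinarith [hbd (f i), hgen0 k (f i / m)]

theorem stmt_1 (S : Set (ℕ → ℝ)) (gen : ℕ → ℕ → ℝ) (hgen : ∀ k, IsC0Star (gen k))
    (hS : S = {η | IsC0Star η ∧
      ∃ k m : ℕ, 0 < m ∧ ∃ C : ℝ, 0 < C ∧ ∀ n, η n ≤ C * gen k (n / m)}) :
    (∀ ξ η : ℕ → ℝ, IsC0Star ξ → η ∈ S → Maj ξ η → ξ ∈ S) ↔ (∀ η ∈ S, am η ∈ S) := by
  change S = {η | IsC0Star η ∧ IsDominated gen η} at hS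
  subst hS
  constructor
  · rintro hclosed η ⟨hη, hηdom⟩
    refine ⟨hη.am, ?_⟩
    rcases (hη.1 0).eq_or_lt with h0 | h0
    · have hzero : ∀ n, η n = 0 := fun n => le_antisymm (h0 ▸ hη.antitone n.zero_le) (hη.1 n)
      exact hηdom.mono fun n => by simp [am, hzero]
    · by_contra hdom
      obtain ⟨ξ, hξ, hmaj, hξdom⟩ :=
        exists_maj_not_isDominated (fun k => (hgen k).antitone) (fun k => (hgen k).1) hη h0 hdom
      exact hξdom (hclosed ξ η hξ ⟨hη, hηdom⟩ hmaj).2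
  · rintro hstable ξ η hξ hηS hmaj
    exact ⟨hξ, (hstable η hηS).2.mono fun n => (hξ.antitone.le_am n).trans (hmaj.am_le n)⟩
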